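/- Let n, d ≥ 1 be integers and let R be a rank matrix. Then for every u ∈ [0,1]^d, the empirical beta copula satisfies C_n^β(u) ≤ min(u_1, …, u_d). -/
import Mathlib

/-- Distribution function of the Beta(r, n-r+1) distribution, i.e. the upper
binomial tail `F_{n,r}(u) = Σ_{s=r}^{n} (n choose s) u^s (1-u)^{n-s}`. -/
noncomputable def Fbeta (n r : ℕ) (u : ℝ) : ℝ :=
  ∑ s ∈ Finset.Icc r n, (n.choose s : ℝ) * u ^ s * (1 - u) ^ (n - s)

/-- The empirical beta copula built from the rank matrix `R`. -/
noncomputable def empBetaCopula (n d : ℕ) (R : Fin n → Fin d → ℕ)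
    (u : Fin d → ℝ) : ℝ :=
  (1 / (n : ℝ)) * ∑ i : Fin n, ∏ j : Fin d, Fbeta n (R i j) (u j)

lemma Fbeta_nonneg (n r : ℕ) {u : ℝ} (h0 : 0 ≤ u) (h1 : u ≤ 1) :
    0 ≤ Fbeta n r u := by
  apply Finset.sum_nonneg
  intro s _
  have : (0:ℝ) ≤ 1 - u := by linarith
  positivity

lemma Fbeta_le_one (n r : ℕ) {u : ℝ} (h0 : 0 ≤ u) (h1 : u ≤ 1) :
    Fbeta n r u ≤ 1 := by
  have h1u : (0:ℝ) ≤ 1 - u := by linarith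
  have hsub : Finset.Icc r n ⊆ Finset.range (n+1) := by
    intro s hs
    simp only [Finset.mem_Icc] at hs
    simp [Nat.lt_succ_iff, hs.2]
  calc Fbeta n r u ≤ ∑ s ∈ Finset.range (n+1), (n.choose s : ℝ) * u ^ s * (1 - u) ^ (n - s) := by
        apply Finset.sum_le_sum_of_subset_of_nonneg hsub
        intro s _ _; positivity
    _ = (u + (1 - u)) ^ n := by
        rw [add_pow]; apply Finset.sum_congr rfl; intro s _; ring
    _ = 1 := by norm_num

lemma sum_Fbeta (n : ℕ) (u : ℝ) :
    ∑ r ∈ Finset.Icc 1 n, Fbeta n r u = n * u := by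
  have swap : ∑ r ∈ Finset.Icc 1 n, ∑ s ∈ Finset.Icc r n,
      (n.choose s : ℝ) * u ^ s * (1 - u) ^ (n - s)
      = ∑ s ∈ Finset.range (n+1), ∑ _r ∈ Finset.Icc 1 s,
      (n.choose s : ℝ) * u ^ s * (1 - u) ^ (n - s) := by
    apply Finset.sum_comm'
    intro r s
    simp only [Finset.mem_Icc, Finset.mem_range, Nat.lt_succ_iff]
    omega
  have key := bernsteinPolynomial.sum_smul ℝ n
  have := congrArg (Polynomial.eval u) key
  simp only [Polynomial.eval_finset_sum, Polynomial.eval_smul, smul_eq_mul,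
    Polynomial.eval_X, bernsteinPolynomial,
    Polynomial.eval_mul, Polynomial.eval_pow, Polynomial.eval_natCast,
    Polynomial.eval_sub, Polynomial.eval_one, nsmul_eq_mul] at this
  unfold Fbeta
  rw [swap]
  calc ∑ s ∈ Finset.range (n+1), ∑ _r ∈ Finset.Icc 1 s,
      (n.choose s : ℝ) * u ^ s * (1 - u) ^ (n - s)
      = ∑ s ∈ Finset.range (n+1), (s:ℝ) * ((n.choose s : ℝ) * u ^ s * (1 - u) ^ (n - s)) := by
        apply Finset.sum_congr rfl; intro s _
        rw [Finset.sum_const, Nat.card_Icc, nsmul_eq_mul]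
        norm_num
    _ = n * u := this

theorem stmt2 (n d : ℕ) (hn : 1 ≤ n) (hd : 1 ≤ d)
    (R : Fin n → Fin d → ℕ)
    (hRrange : ∀ i j, R i j ∈ Finset.Icc 1 n)
    (hRperm : ∀ j : Fin d, Function.Injective fun i : Fin n => R i j)
    (u : Fin d → ℝ) (hu : ∀ j, u j ∈ Set.Icc (0 : ℝ) 1) :
    ∀ j, empBetaCopula n d R u ≤ u j := by
  intro j
  have hnpos : (0:ℝ) < n := by exact_mod_cast hn
  -- product bounded by the j-th factor
  have hprod : ∀ i : Fin n, (∏ k : Fin d, Fbeta n (R i k) (u k)) ≤ Fbeta n (R i j) (u j) := by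
    intro i
    rw [← Finset.mul_prod_erase Finset.univ _ (Finset.mem_univ j)]
    have h1 : (∏ k ∈ Finset.univ.erase j, Fbeta n (R i k) (u k)) ≤ 1 := by
      apply Finset.prod_le_one
      · intro k _; exact Fbeta_nonneg _ _ (hu k).1 (hu k).2
      · intro k _; exact Fbeta_le_one _ _ (hu k).1 (hu k).2
    have h0 : 0 ≤ Fbeta n (R i j) (u j) := Fbeta_nonneg _ _ (hu j).1 (hu j).2
    nlinarith
  -- the image of R · j is Icc 1 n
  have himg : Finset.image (fun i : Fin n => R i j) Finset.univ = Finset.Icc 1 n := by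
    apply Finset.eq_of_subset_of_card_le
    · intro x hx
      simp only [Finset.mem_image] at hx
      obtain ⟨i, _, rfl⟩ := hx
      exact hRrange i j
    · rw [Finset.card_image_of_injective _ (hRperm j)]
      simp [Nat.card_Icc]
  have hsum : ∑ i : Fin n, Fbeta n (R i j) (u j) = n * u j := by
    rw [← sum_Fbeta n (u j), ← himg,
      Finset.sum_image (fun a _ b _ h => hRperm j h)]
  have : ∑ i : Fin n, ∏ k : Fin d, Fbeta n (R i k) (u k) ≤ n * u j := by
    rw [← hsum]; exact Finset.sum_le_sum fun i _ => hprod i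
  rw [empBetaCopula, one_div]
  rw [inv_mul_le_iff₀ hnpos]
  linarith
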